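/- Let C ⊂ ℝ be a finite set and let π = (π₁,…,π_n) and σ = (σ₁,…,σ_m) be curves in ℝ^d, equipped with the L₁ norm, such that every coordinate of every point π_i and every point σ_j lies in C. Then there exists a translation τ* ∈ ℝ^d with every coordinate in C − C = {x − y : x, y ∈ C}, such that d_DTW(π, σ+τ*) ≤ d_DTW(π, σ+τ) for all τ ∈ ℝ^d. -/

import Mathlib

open Finset

/-- A traversal of two curves of lengths `n` and `m` (1-indexed): a nonempty list of
index pairs starting at `(1,1)`, ending at `(n,m)`, where each step increases the first
index, the second index, or both, by one. -/
def IsTraversal (n m : ℕ) (T : List (ℕ × ℕ)) : Prop :=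
  T.head? = some (1, 1) ∧ T.getLast? = some (n, m) ∧
  ∀ ℓ : ℕ, ℓ + 1 < T.length →
    T.getD (ℓ + 1) (0, 0) = ((T.getD ℓ (0, 0)).1 + 1, (T.getD ℓ (0, 0)).2) ∨
    T.getD (ℓ + 1) (0, 0) = ((T.getD ℓ (0, 0)).1, (T.getD ℓ (0, 0)).2 + 1) ∨
    T.getD (ℓ + 1) (0, 0) = ((T.getD ℓ (0, 0)).1 + 1, (T.getD ℓ (0, 0)).2 + 1)

/-- The `L₁` norm on `ℝ^d`. -/
def l1norm {d : ℕ} (x : Fin d → ℝ) : ℝ := ∑ k, |x k|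

/-- The dynamic time warping distance, with respect to the `L₁` norm on `ℝ^d`, of two
curves `π = (π 1, …, π n)` and `σ = (σ 1, …, σ m)`: the minimum, over all traversals, of
the sum of the `L₁` distances of the paired points. -/
noncomputable def dtwL1 {d : ℕ} (n m : ℕ) (π σ : ℕ → Fin d → ℝ) : ℝ :=
  sInf {c : ℝ | ∃ T : List (ℕ × ℕ), IsTraversal n m T ∧
    (T.map fun p => l1norm (π p.1 - σ p.2)).sum = c}


/-! For a fixed traversal `T`, the cost of `σ + τ` splits over the coordinates as
`∑ k, ∑ (i, j) ∈ T, |(π i k - σ j k) - τ k|`, and a sum of absolute deviations `∑ x, |x - t|`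
over a nonempty multiset is minimised at one of its points: it does not increase when `t` is
projected onto `[min, max]`, and it is affine on each gap between consecutive points. Hence
every `τ` is beaten, traversal by traversal, by a translation whose coordinates have the form
`π i k - σ j k ∈ C - C`, and a minimiser of `d_DTW` over the finite grid `(C - C)^d` beats
every `τ`. -/

namespace Multiset

lemma mul_sum_map_abs_sub_eq_of_forall_le_or_ge {a : Multiset ℝ} {lo s hi : ℝ} (hlo : lo ≤ s)
    (hhi : s ≤ hi) (hgap : ∀ x ∈ a, x ≤ lo ∨ hi ≤ x) :
    (hi - lo) * (a.map fun x => |x - s|).sum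
      = (hi - s) * (a.map fun x => |x - lo|).sum + (s - lo) * (a.map fun x => |x - hi|).sum := by
  simp only [← sum_map_mul_left, ← sum_map_add]
  refine congrArg sum (map_congr rfl fun x hx => ?_)
  rcases hgap x hx with hx | hx
  · rw [abs_of_nonpos (by linarith), abs_of_nonpos (by linarith), abs_of_nonpos (by linarith)]
    ring
  · rw [abs_of_nonneg (by linarith), abs_of_nonneg (by linarith), abs_of_nonneg (by linarith)]
    ring

lemma sum_map_abs_sub_le_or_of_forall_le_or_ge {a : Multiset ℝ} {lo s hi : ℝ} (hlo : lo ≤ s)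
    (hhi : s ≤ hi) (hgap : ∀ x ∈ a, x ≤ lo ∨ hi ≤ x) :
    (a.map fun x => |x - lo|).sum ≤ (a.map fun x => |x - s|).sum ∨
      (a.map fun x => |x - hi|).sum ≤ (a.map fun x => |x - s|).sum := by
  have h := mul_sum_map_abs_sub_eq_of_forall_le_or_ge hlo hhi hgap
  rcases hlo.eq_or_lt with rfl | hlo
  · exact Or.inl le_rfl
  by_contra! hlt
  nlinarith [hlt.1, hlt.2]

theorem exists_mem_sum_map_abs_sub_le {a : Multiset ℝ} (ha : a ≠ 0) (s : ℝ) :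
    ∃ t ∈ a, (a.map fun x => |x - t|).sum ≤ (a.map fun x => |x - s|).sum := by
  classical
  have hne : a.toFinset.Nonempty := by simpa [Finset.nonempty_iff_ne_empty] using ha
  set m := a.toFinset.min' hne
  set M := a.toFinset.max' hne
  have hmM : m ≤ M := a.toFinset.min'_le_max' hne
  set s' : ℝ := (Set.projIcc m M hmM s : ℝ)
  have hs' : s' ∈ Set.Icc m M := (Set.projIcc m M hmM s).2
  have hclamp : (a.map fun x => |x - s'|).sum ≤ (a.map fun x => |x - s|).sum := by
    refine sum_map_le_sum_map _ _ fun x hx => ?_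
    have hx' : x ∈ Set.Icc m M :=
      ⟨a.toFinset.min'_le x (mem_toFinset.2 hx), a.toFinset.le_max' x (mem_toFinset.2 hx)⟩
    simpa [Set.projIcc_of_mem hmM hx'] using Set.abs_projIcc_sub_projIcc hmM (c := x) (d := s)
  have hbelow : (a.toFinset.filter (· ≤ s')).Nonempty :=
    ⟨m, Finset.mem_filter.2 ⟨a.toFinset.min'_mem hne, hs'.1⟩⟩
  have habove : (a.toFinset.filter (s' ≤ ·)).Nonempty :=
    ⟨M, Finset.mem_filter.2 ⟨a.toFinset.max'_mem hne, hs'.2⟩⟩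
  set lo := (a.toFinset.filter (· ≤ s')).max' hbelow
  set hi := (a.toFinset.filter (s' ≤ ·)).min' habove
  have hlo := Finset.mem_filter.1 ((a.toFinset.filter (· ≤ s')).max'_mem hbelow)
  have hhi := Finset.mem_filter.1 ((a.toFinset.filter (s' ≤ ·)).min'_mem habove)
  have hgap : ∀ x ∈ a, x ≤ lo ∨ hi ≤ x := fun x hx => (le_total x s').imp
    (fun h => Finset.le_max' _ x (Finset.mem_filter.2 ⟨mem_toFinset.2 hx, h⟩))
    (fun h => Finset.min'_le _ x (Finset.mem_filter.2 ⟨mem_toFinset.2 hx, h⟩))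
  rcases sum_map_abs_sub_le_or_of_forall_le_or_ge hlo.2 hhi.2 hgap with h | h
  · exact ⟨lo, mem_toFinset.1 hlo.1, h.trans hclamp⟩
  · exact ⟨hi, mem_toFinset.1 hhi.1, h.trans hclamp⟩

end Multiset

open scoped Pointwise

def traversalCost {d : ℕ} (π σ : ℕ → Fin d → ℝ) (T : List (ℕ × ℕ)) : ℝ :=
  (T.map fun p => l1norm (π p.1 - σ p.2)).sum

lemma traversalCost_nonneg {d : ℕ} (π σ : ℕ → Fin d → ℝ) (T : List (ℕ × ℕ)) :
    0 ≤ traversalCost π σ T :=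
  List.sum_nonneg <| by
    simp only [List.mem_map]
    rintro _ ⟨p, -, rfl⟩
    exact Finset.sum_nonneg fun k _ => abs_nonneg _

lemma traversalCost_translate_eq_sum {d : ℕ} (π σ : ℕ → Fin d → ℝ) (τ : Fin d → ℝ)
    (T : List (ℕ × ℕ)) :
    traversalCost π (fun j => σ j + τ) T =
      ∑ k, (((T.map fun p => π p.1 k - σ p.2 k : List ℝ) : Multiset ℝ).map
        fun x => |x - τ k|).sum := by
  simp only [traversalCost, l1norm, ← Multiset.sum_coe, ← Multiset.map_coe, Multiset.sum_map_sum,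
    Multiset.map_map]
  simp [sub_sub]

lemma exists_traversalCost_translate_le {d : ℕ} (π σ : ℕ → Fin d → ℝ) (τ : Fin d → ℝ)
    {T : List (ℕ × ℕ)} (hT : T ≠ []) :
    ∃ t : Fin d → ℝ, (∀ k, ∃ p ∈ T, t k = π p.1 k - σ p.2 k) ∧
      traversalCost π (fun j => σ j + t) T ≤ traversalCost π (fun j => σ j + τ) T := by
  have hmed k := Multiset.exists_mem_sum_map_abs_sub_le
    (a := ((T.map fun p => π p.1 k - σ p.2 k : List ℝ) : Multiset ℝ)) (by simpa using hT) (τ k)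
  choose t ht hle using hmed
  refine ⟨t, fun k => ?_, ?_⟩
  · obtain ⟨p, hp, hpk⟩ := List.mem_map.1 (Multiset.mem_coe.1 (ht k))
    exact ⟨p, hp, hpk.symm⟩
  · rw [traversalCost_translate_eq_sum, traversalCost_translate_eq_sum]
    exact Finset.sum_le_sum fun k _ => hle k

namespace IsTraversal

variable {n m : ℕ} {T : List (ℕ × ℕ)}

lemma ne_nil (hT : IsTraversal n m T) : T ≠ [] := by
  rintro rfl
  simp [IsTraversal] at hT

lemma getD_mono (hT : IsTraversal n m T) {i j : ℕ} (hij : i ≤ j) (hj : j < T.length) :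
    T.getD i (0, 0) ≤ T.getD j (0, 0) := by
  induction hij with
  | refl => exact le_rfl
  | @step k hik ih =>
    refine (ih (by omega)).trans ?_
    rcases hT.2.2 k hj with h | h | h <;> rw [h, Prod.le_def] <;> dsimp only <;> omega

lemma mem_Icc (hT : IsTraversal n m T) {p : ℕ × ℕ} (hp : p ∈ T) :
    p.1 ∈ Finset.Icc 1 n ∧ p.2 ∈ Finset.Icc 1 m := by
  obtain ⟨i, hi, rfl⟩ := List.getElem_of_mem hp
  have hfirst : T.getD 0 (0, 0) = (1, 1) := by
    simp [List.getD_eq_getElem?_getD, ← List.head?_eq_getElem?, hT.1]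
  have hlast : T.getD (T.length - 1) (0, 0) = (n, m) := by
    simp [List.getD_eq_getElem?_getD, ← List.getLast?_eq_getElem?, hT.2.1]
  have hlow := hT.getD_mono (Nat.zero_le i) hi
  have hhigh := hT.getD_mono (Nat.le_sub_one_of_lt hi) (by omega)
  rw [hfirst, List.getD_eq_getElem _ _ hi] at hlow
  rw [hlast, List.getD_eq_getElem _ _ hi] at hhigh
  simp only [Finset.mem_Icc]
  exact ⟨⟨hlow.1, hhigh.1⟩, hlow.2, hhigh.2⟩

end IsTraversal

lemma exists_isTraversal {n m : ℕ} (hn : 1 ≤ n) (hm : 1 ≤ m) : ∃ T, IsTraversal n m T := by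
  refine ⟨(List.range (n + m - 1)).map fun ℓ => (min (ℓ + 1) n, ℓ + 2 - min (ℓ + 1) n),
    ?_, ?_, fun ℓ hℓ => ?_⟩
  · rw [List.head?_eq_getElem?, List.getElem?_eq_getElem (by simp; omega)]
    simp only [List.getElem_map, List.getElem_range, Option.some.injEq, Prod.mk.injEq]
    omega
  · rw [List.getLast?_eq_getElem?, List.getElem?_eq_getElem (by simp; omega)]
    simp only [List.getElem_map, List.getElem_range, List.length_map, List.length_range,
      Option.some.injEq, Prod.mk.injEq]
    omega
  · simp only [List.length_map, List.length_range] at hℓ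
    rw [List.getD_eq_getElem _ _ (by simp; omega), List.getD_eq_getElem _ _ (by simp; omega)]
    simp only [List.getElem_map, List.getElem_range, Prod.mk.injEq]
    omega

section dtwL1

variable {d n m : ℕ} (π σ : ℕ → Fin d → ℝ)

lemma dtwL1_le_traversalCost {T : List (ℕ × ℕ)} (hT : IsTraversal n m T) :
    dtwL1 n m π σ ≤ traversalCost π σ T :=
  csInf_le ⟨0, by rintro _ ⟨T, -, rfl⟩; exact traversalCost_nonneg π σ T⟩ ⟨T, hT, rfl⟩

lemma le_dtwL1 (hn : 1 ≤ n) (hm : 1 ≤ m) {c : ℝ}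
    (hc : ∀ T, IsTraversal n m T → c ≤ traversalCost π σ T) : c ≤ dtwL1 n m π σ := by
  obtain ⟨T, hT⟩ := exists_isTraversal hn hm
  exact le_csInf ⟨_, T, hT, rfl⟩ (by rintro _ ⟨T, hT, rfl⟩; exact hc T hT)

end dtwL1

lemma IsTraversal.exists_mem_piFinset_sub_traversalCost_le {d n m : ℕ} {C : Finset ℝ}
    {π σ : ℕ → Fin d → ℝ} (hπ : ∀ i ∈ Finset.Icc 1 n, ∀ k, π i k ∈ C)
    (hσ : ∀ j ∈ Finset.Icc 1 m, ∀ k, σ j k ∈ C) {T : List (ℕ × ℕ)} (hT : IsTraversal n m T)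
    (τ : Fin d → ℝ) :
    ∃ t ∈ Fintype.piFinset fun _ => C - C,
      traversalCost π (fun j => σ j + t) T ≤ traversalCost π (fun j => σ j + τ) T := by
  obtain ⟨t, ht, hle⟩ := exists_traversalCost_translate_le π σ τ hT.ne_nil
  refine ⟨t, Fintype.mem_piFinset.2 fun k => ?_, hle⟩
  obtain ⟨p, hp, hpk⟩ := ht k
  obtain ⟨hi, hj⟩ := hT.mem_Icc hp
  exact hpk ▸ Finset.sub_mem_sub (hπ _ hi k) (hσ _ hj k)

/-- If all coordinates of all points of `π` and `σ` lie in a finite set `C ⊂ ℝ`, then (for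
the `L₁` norm) there is a global minimizer `τ*` of `τ ↦ d_DTW(π, σ + τ)` all of whose
coordinates lie in `C - C = {x - y : x, y ∈ C}`. -/
theorem dtwL1_min_on_difference_set (d n m : ℕ) (hn : 1 ≤ n) (hm : 1 ≤ m)
    (C : Finset ℝ) (π σ : ℕ → Fin d → ℝ)
    (hπ : ∀ i ∈ Finset.Icc 1 n, ∀ k : Fin d, π i k ∈ C)
    (hσ : ∀ j ∈ Finset.Icc 1 m, ∀ k : Fin d, σ j k ∈ C) :
    ∃ τs : Fin d → ℝ, (∀ k : Fin d, ∃ x ∈ C, ∃ y ∈ C, τs k = x - y) ∧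
      ∀ τ : Fin d → ℝ, dtwL1 n m π (fun j => σ j + τs) ≤ dtwL1 n m π (fun j => σ j + τ) := by
  obtain ⟨T₀, hT₀⟩ := exists_isTraversal hn hm
  obtain ⟨t₀, ht₀, -⟩ := hT₀.exists_mem_piFinset_sub_traversalCost_le hπ hσ 0
  obtain ⟨τs, hτs, hmin⟩ := (Fintype.piFinset fun _ => C - C).exists_min_image
    (fun t => dtwL1 n m π fun j => σ j + t) ⟨t₀, ht₀⟩
  refine ⟨τs, fun k => ?_, fun τ => le_dtwL1 π _ hn hm fun T hT => ?_⟩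
  · obtain ⟨x, hx, y, hy, hxy⟩ := Finset.mem_sub.1 (Fintype.mem_piFinset.1 hτs k)
    exact ⟨x, hx, y, hy, hxy.symm⟩
  · obtain ⟨t, ht, hle⟩ := hT.exists_mem_piFinset_sub_traversalCost_le hπ hσ τ
    exact (hmin t ht).trans ((dtwL1_le_traversalCost π _ hT).trans hle)
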